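/- For fixed integers r > k ≥ 2, limsup_{n→∞} f_r(n, 3r-2k, 3)/n^k ≤ 1/(k!·C(r,k) - k!/2). -/

import Mathlib

/-!
Write `c = C(r,k)` and `c' = C(r,k-1)`. If any three edges of an `r`-uniform family `H` span more
than `3r - 2k` vertices, then `|A ∩ B| + |A ∩ C| < 2k` for distinct edges `A, B, C`. Hence every
`k`-set lies in at most two edges, so `c |H| ≤ C(n,k) + d`, where `d` counts the `k`-sets lying in
two edges. Every edge contains at most `c` of these `k`-sets, and an edge meeting every other edge
in at most `k` vertices contains at most one, namely `A ∩ B` for the unique `B` with `|A ∩ B| = k`.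
The remaining ("bad") edges are few: every `(k-1)`-set lies in at most two of them, so there are at
most `2 C(n,k-1) / c'`. Counting incidences gives `2d ≤ |H| + 2c C(n,k-1) / c'`, hence
`(2c - 1) |H| ≤ 2 C(n,k) + O(n^(k-1)) ≤ 2 n^k / k! + O(n^(k-1))`.
-/

open Finset Filter

/-- `sparseTuranNumber n r v e` is `f_r(n,v,e)`. -/
noncomputable def sparseTuranNumber (n r v e : ℕ) : ℕ :=
  sSup {m | ∃ H : Finset (Finset (Fin n)),
    (∀ A ∈ H, A.card = r) ∧
    (∀ S ⊆ H, S.card = e → v + 1 ≤ (S.sup id).card) ∧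
    H.card = m}

variable {α : Type*} [DecidableEq α]

lemma card_union_union_add_card_inter_add_card_inter_le (A B C : Finset α) :
    #(A ∪ B ∪ C) + #(A ∩ B) + #(A ∩ C) ≤ #A + #B + #C := by
  have hsub : A ∪ B ∪ C ⊆ A ∪ B ∪ (C \ A) := by
    intro x
    simp only [mem_union, Finset.mem_sdiff]
    tauto
  have := (card_le_card hsub).trans (card_union_le _ _)
  have := card_union_add_card_inter A B
  have := card_sdiff_add_card_inter C A
  rw [inter_comm C A] at this
  omega

def IntersectionsSumLt (k : ℕ) (H : Finset (Finset α)) : Prop :=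
  ∀ ⦃A⦄, A ∈ H → ∀ ⦃B⦄, B ∈ H → ∀ ⦃C⦄, C ∈ H → A ≠ B → A ≠ C → B ≠ C →
    #(A ∩ B) + #(A ∩ C) < 2 * k

lemma intersectionsSumLt_of_card_sup_three {r k : ℕ} {H : Finset (Finset α)}
    (hH : (H : Set (Finset α)).Sized r)
    (hP : ∀ S ⊆ H, #S = 3 → 3 * r - 2 * k + 1 ≤ #(S.sup id)) :
    IntersectionsSumLt k H := by
  intro A hA B hB C hC hAB hAC hBC
  have hS : {A, B, C} ⊆ H := by simp [insert_subset_iff, hA, hB, hC]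
  have hunion := hP _ hS (card_eq_three.mpr ⟨A, B, C, hAB, hAC, hBC, rfl⟩)
  simp only [sup_insert, sup_singleton, id, sup_eq_union, ← union_assoc] at hunion
  have := card_union_union_add_card_inter_add_card_inter_le A B C
  rw [hH hA, hH hB, hH hC] at this
  omega

def badEdges (k : ℕ) (H : Finset (Finset α)) : Finset (Finset α) :=
  {A ∈ H | ∃ B ∈ H, B ≠ A ∧ k < #(A ∩ B)}

lemma badEdges_subset {k : ℕ} {H : Finset (Finset α)} : badEdges k H ⊆ H :=
  filter_subset _ _

lemma eq_inter_of_notMem_badEdges {k : ℕ} {H : Finset (Finset α)} {A B K : Finset α}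
    (hA : A ∈ H) (hA' : A ∉ badEdges k H) (hB : B ∈ H) (hBA : B ≠ A) (hKAB : K ⊆ A ∩ B)
    (hK : k ≤ #K) : K = A ∩ B := by
  refine eq_of_subset_of_card_le hKAB ?_
  have : ¬k < #(A ∩ B) := fun h => hA' (mem_filter.mpr ⟨hA, B, hB, hBA, h⟩)
  omega

namespace IntersectionsSumLt

variable {k : ℕ} {H : Finset (Finset α)}

lemma card_filter_superset_le_two (hI : IntersectionsSumLt k H) {K : Finset α}
    (hK : k ≤ #K) : #{A ∈ H | K ⊆ A} ≤ 2 := by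
  by_contra! h
  obtain ⟨A, hA, B, hB, C, hC, hAB, hAC, hBC⟩ := two_lt_card.mp h
  simp only [mem_filter] at hA hB hC
  have := hI hA.1 hB.1 hC.1 hAB hAC hBC
  have := card_le_card (subset_inter hA.2 hB.2)
  have := card_le_card (subset_inter hA.2 hC.2)
  omega

lemma card_filter_badEdges_superset_le_two (hI : IntersectionsSumLt k H) {K : Finset α}
    (hK : k - 1 ≤ #K) : #{A ∈ badEdges k H | K ⊆ A} ≤ 2 := by
  by_contra! h
  obtain ⟨A, hA, A₂, hA₂, A₃, hA₃, hA₂A, hA₃A, hA₂₃⟩ := two_lt_card.mp h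
  simp only [badEdges, mem_filter] at hA hA₂ hA₃
  obtain ⟨⟨hAH, B, hB, hBA, hAB⟩, hKA⟩ := hA
  obtain ⟨C, hC, hCA, hCB, hKC⟩ : ∃ C ∈ H, C ≠ A ∧ C ≠ B ∧ K ⊆ C := by
    by_cases h₂ : A₂ = B
    · exact ⟨A₃, hA₃.1.1, hA₃A.symm, h₂ ▸ hA₂₃.symm, hA₃.2⟩
    · exact ⟨A₂, hA₂.1.1, hA₂A.symm, h₂, hA₂.2⟩
  have := hI hAH hB hC hBA.symm hCA.symm hCB.symm
  have := card_le_card (subset_inter hKA hKC)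
  omega

end IntersectionsSumLt

section Counting

lemma sum_card_filter_superset_comm (T F : Finset (Finset α)) :
    ∑ K ∈ T, #{A ∈ F | K ⊆ A} = ∑ A ∈ F, #{K ∈ T | K ⊆ A} := by
  simp only [card_filter]
  exact sum_comm

variable [Fintype α]

lemma card_filter_powersetCard_univ_subset (j : ℕ) (A : Finset α) :
    #{K ∈ powersetCard j (univ : Finset α) | K ⊆ A} = (#A).choose j := by
  rw [← card_powersetCard]
  congr 1
  ext K
  simp only [mem_filter, mem_powersetCard, subset_univ, true_and]
  exact and_comm

lemma sum_card_filter_superset {r : ℕ} {F : Finset (Finset α)}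
    (hF : (F : Set (Finset α)).Sized r) (j : ℕ) :
    ∑ K ∈ powersetCard j univ, #{A ∈ F | K ⊆ A} = #F * r.choose j := by
  calc ∑ K ∈ powersetCard j univ, #{A ∈ F | K ⊆ A}
      = ∑ A ∈ F, #{K ∈ powersetCard j univ | K ⊆ A} :=
        sum_card_filter_superset_comm _ _
    _ = ∑ _A ∈ F, r.choose j :=
        sum_congr rfl fun A hA => by rw [card_filter_powersetCard_univ_subset, hF hA]
    _ = #F * r.choose j := by rw [sum_const, smul_eq_mul]

lemma card_mul_choose_le_of_card_filter_superset_le {r j d : ℕ} {F : Finset (Finset α)}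
    (hF : (F : Set (Finset α)).Sized r) (hd : ∀ K : Finset α, #K = j → #{A ∈ F | K ⊆ A} ≤ d) :
    #F * r.choose j ≤ (Fintype.card α).choose j * d := by
  rw [← sum_card_filter_superset hF, ← card_univ, ← card_powersetCard, ← smul_eq_mul,
    ← sum_const]
  exact sum_le_sum fun K hK => hd K (mem_powersetCard_univ.mp hK)

def doublyCoveredSets (k : ℕ) (H : Finset (Finset α)) : Finset (Finset α) :=
  {K ∈ powersetCard k univ | 1 < #{A ∈ H | K ⊆ A}}

namespace IntersectionsSumLt

variable {r k : ℕ} {H : Finset (Finset α)}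

lemma card_mul_choose_le_add_card_doublyCoveredSets (hH : (H : Set (Finset α)).Sized r)
    (hI : IntersectionsSumLt k H) :
    #H * r.choose k ≤ (Fintype.card α).choose k + #(doublyCoveredSets k H) := by
  have hdeg : ∀ K ∈ powersetCard k (univ : Finset α),
      #{A ∈ H | K ⊆ A} ≤ 1 + if 1 < #{A ∈ H | K ⊆ A} then 1 else 0 := by
    intro K hK
    have := hI.card_filter_superset_le_two (mem_powersetCard_univ.mp hK).ge
    split_ifs <;> omega
  calc #H * r.choose k = ∑ K ∈ powersetCard k univ, #{A ∈ H | K ⊆ A} :=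
        (sum_card_filter_superset hH k).symm
    _ ≤ _ := sum_le_sum hdeg
    _ = (Fintype.card α).choose k + #(doublyCoveredSets k H) := by
        rw [sum_add_distrib, sum_const, card_powersetCard, card_univ, smul_eq_mul, mul_one,
          sum_boole, Nat.cast_id, doublyCoveredSets]

lemma card_filter_doublyCoveredSets_subset_le_one (hI : IntersectionsSumLt k H)
    {A : Finset α} (hA : A ∈ H) (hA' : A ∉ badEdges k H) :
    #{K ∈ doublyCoveredSets k H | K ⊆ A} ≤ 1 := by
  have hinter : ∀ K ∈ {K ∈ doublyCoveredSets k H | K ⊆ A},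
      ∃ B ∈ H, B ≠ A ∧ K = A ∩ B ∧ #K = k := by
    intro K hK
    simp only [doublyCoveredSets, mem_filter, mem_powersetCard_univ] at hK
    obtain ⟨⟨hKk, hKdeg⟩, hKA⟩ := hK
    obtain ⟨B, hB, hBA⟩ := exists_mem_ne hKdeg A
    rw [mem_filter] at hB
    exact ⟨B, hB.1, hBA,
      eq_inter_of_notMem_badEdges hA hA' hB.1 hBA (subset_inter hKA hB.2) hKk.ge, hKk⟩
  rw [card_le_one]
  intro K₁ hK₁ K₂ hK₂
  obtain ⟨B₁, hB₁, hB₁A, rfl, h₁⟩ := hinter K₁ hK₁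
  obtain ⟨B₂, hB₂, hB₂A, rfl, h₂⟩ := hinter K₂ hK₂
  obtain rfl : B₁ = B₂ := by
    by_contra hne
    have := hI hA hB₁ hB₂ hB₁A.symm hB₂A.symm hne
    omega
  rfl

lemma two_mul_card_doublyCoveredSets_le (hH : (H : Set (Finset α)).Sized r)
    (hI : IntersectionsSumLt k H) :
    2 * #(doublyCoveredSets k H) ≤ #H + r.choose k * #(badEdges k H) := by
  have hcover : ∀ K ∈ doublyCoveredSets k H, 2 ≤ #{A ∈ H | K ⊆ A} :=
    fun K hK => (mem_filter.mp hK).2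
  have hedge : ∀ A ∈ H, #{K ∈ doublyCoveredSets k H | K ⊆ A}
      ≤ 1 + r.choose k * if A ∈ badEdges k H then 1 else 0 := by
    intro A hA
    split_ifs with hbad
    · calc #{K ∈ doublyCoveredSets k H | K ⊆ A}
          ≤ #{K ∈ powersetCard k univ | K ⊆ A} :=
            card_le_card (filter_subset_filter _ (filter_subset _ _))
        _ = r.choose k := by rw [card_filter_powersetCard_univ_subset, hH hA]
        _ ≤ 1 + r.choose k * 1 := by omega
    · simpa using hI.card_filter_doublyCoveredSets_subset_le_one hA hbad
  calc 2 * #(doublyCoveredSets k H)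
      ≤ ∑ K ∈ doublyCoveredSets k H, #{A ∈ H | K ⊆ A} := by
        rw [mul_comm, ← smul_eq_mul, ← sum_const]
        exact sum_le_sum hcover
    _ = ∑ A ∈ H, #{K ∈ doublyCoveredSets k H | K ⊆ A} :=
        sum_card_filter_superset_comm _ _
    _ ≤ ∑ A ∈ H, (1 + r.choose k * if A ∈ badEdges k H then 1 else 0) := sum_le_sum hedge
    _ = #H + r.choose k * #(badEdges k H) := by
        rw [sum_add_distrib, ← mul_sum, sum_boole, Nat.cast_id,
          filter_mem_eq_of_subset badEdges_subset, sum_const, smul_eq_mul, mul_one]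

theorem card_mul_le (hH : (H : Set (Finset α)).Sized r) (hI : IntersectionsSumLt k H) :
    #H * ((2 * r.choose k - 1) * r.choose (k - 1))
      ≤ 2 * (Fintype.card α).choose k * r.choose (k - 1)
        + 2 * (Fintype.card α).choose (k - 1) * r.choose k := by
  have hD := hI.card_mul_choose_le_add_card_doublyCoveredSets hH
  have hD₂ := hI.two_mul_card_doublyCoveredSets_le hH
  have hbad := card_mul_choose_le_of_card_filter_superset_le (j := k - 1) (d := 2)
    (hH.mono (coe_subset.mpr badEdges_subset))
    fun K hK => hI.card_filter_badEdges_superset_le_two hK.ge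
  generalize r.choose k = c at hD hD₂ ⊢
  cases c with
  | zero => simp
  | succ c =>
    rw [show 2 * (c + 1) - 1 = 2 * c + 1 by omega]
    nlinarith

end IntersectionsSumLt

end Counting

lemma exists_card_eq_sparseTuranNumber {n r v e : ℕ} (he : e ≠ 0) :
    ∃ H : Finset (Finset (Fin n)), (∀ A ∈ H, #A = r) ∧
      (∀ S ⊆ H, #S = e → v + 1 ≤ #(S.sup id)) ∧ #H = sparseTuranNumber n r v e := by
  refine Nat.sSup_mem (s := {m | ∃ H : Finset (Finset (Fin n)), (∀ A ∈ H, #A = r) ∧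
      (∀ S ⊆ H, #S = e → v + 1 ≤ #(S.sup id)) ∧ #H = m})
    ⟨0, ∅, by simp, fun S hS hSe => ?_, rfl⟩ ⟨2 ^ n, ?_⟩
  · rw [subset_empty.mp hS, card_empty] at hSe
    exact absurd hSe.symm he
  · rintro _ ⟨H, -, -, rfl⟩
    simpa using card_le_univ H

lemma sparseTuranNumber_mul_le (n r k : ℕ) :
    sparseTuranNumber n r (3 * r - 2 * k) 3 * ((2 * r.choose k - 1) * r.choose (k - 1))
      ≤ 2 * n.choose k * r.choose (k - 1) + 2 * n.choose (k - 1) * r.choose k := by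
  obtain ⟨H, hH, hP, hHcard⟩ := exists_card_eq_sparseTuranNumber (n := n) (r := r)
    (v := 3 * r - 2 * k) three_ne_zero
  have hH : (H : Set (Finset (Fin n))).Sized r := fun A hA => hH A hA
  simpa [← hHcard] using (intersectionsSumLt_of_card_sup_three hH hP).card_mul_le hH

lemma limsup_le_of_eventually_le_add_div {u : ℕ → ℝ} {L E : ℝ} (hu : ∀ n, 0 ≤ u n)
    (h : ∀ᶠ n in atTop, u n ≤ L + E / n) : limsup u atTop ≤ L := by
  have hlim : Tendsto (fun n : ℕ => L + E / n) atTop (nhds L) := by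
    simpa using tendsto_const_nhds.add (tendsto_const_div_atTop_nhds_zero_nat E)
  calc limsup u atTop ≤ limsup (fun n : ℕ => L + E / n) atTop :=
        limsup_le_limsup h (isCoboundedUnder_le_of_le atTop hu) hlim.isBoundedUnder_le
    _ = L := hlim.limsup_eq

lemma sparseTuranNumber_div_pow_le {n r k : ℕ} (hk : 0 < k) (hkr : k ≤ r) (hn : 0 < n) :
    (sparseTuranNumber n r (3 * r - 2 * k) 3 : ℝ) / n ^ k
      ≤ 1 / ((k.factorial : ℝ) * r.choose k - k.factorial / 2)
        + 2 * r.choose k / ((2 * r.choose k - 1) * r.choose (k - 1)) / n := by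
  obtain ⟨j, rfl⟩ : ∃ j, k = j + 1 := ⟨k - 1, by omega⟩
  rw [Nat.add_sub_cancel]
  set c : ℝ := (r.choose (j + 1) : ℝ)
  set c' : ℝ := (r.choose j : ℝ)
  have hc : 1 ≤ c := Nat.one_le_cast.mpr (Nat.choose_pos hkr)
  have hc' : 1 ≤ c' := Nat.one_le_cast.mpr (Nat.choose_pos (by omega))
  have hD : 0 < (2 * c - 1) * c' := by nlinarith
  have hcount : (sparseTuranNumber n r (3 * r - 2 * (j + 1)) 3 : ℝ) * ((2 * c - 1) * c')
      ≤ 2 * (n.choose (j + 1) : ℝ) * c' + 2 * (n.choose j : ℝ) * c := by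
    have h := sparseTuranNumber_mul_le n r (j + 1)
    rw [Nat.add_sub_cancel] at h
    have h2c : 1 ≤ 2 * r.choose (j + 1) := by have := Nat.choose_pos hkr; omega
    have hR := (Nat.cast_le (α := ℝ)).mpr h
    push_cast [Nat.cast_sub h2c] at hR
    exact hR
  have hchoose : (n.choose (j + 1) : ℝ) ≤ n ^ (j + 1) / (j + 1).factorial :=
    Nat.choose_le_pow_div (j + 1) n
  have hchoose' : (n.choose j : ℝ) ≤ n ^ j := by exact_mod_cast Nat.choose_le_pow n j
  calc (sparseTuranNumber n r (3 * r - 2 * (j + 1)) 3 : ℝ) / n ^ (j + 1)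
      ≤ (2 * (n ^ (j + 1) / (j + 1).factorial) * c' + 2 * n ^ j * c)
          / ((2 * c - 1) * c') / n ^ (j + 1) := by
        gcongr
        rw [le_div_iff₀ hD]
        refine hcount.trans ?_
        gcongr
    _ = 1 / ((j + 1).factorial * c - (j + 1).factorial / 2)
          + 2 * c / ((2 * c - 1) * c') / n := by
        field_simp
        ring

/-- For fixed r > k ≥ 2,
`limsup f_r(n, 3r-2k, 3)/n^k ≤ 1/(k!·C(r,k) - k!/2)`. -/
theorem limsup_upper_bound (r k : ℕ) (hk : 2 ≤ k) (hrk : k < r) :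
    limsup (fun n : ℕ => (sparseTuranNumber n r (3 * r - 2 * k) 3 : ℝ) / n ^ k)
        atTop
      ≤ 1 / ((k.factorial : ℝ) * r.choose k - k.factorial / 2) :=
  limsup_le_of_eventually_le_add_div (fun n => by positivity)
    ((eventually_gt_atTop 0).mono fun n hn => sparseTuranNumber_div_pow_le (by omega) hrk.le hn)
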